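/- arXiv:1410.6590 — 3 statements merged into one kernel-verified Lean document; each statement's English description precedes it below -/
import Mathlib

section
/- Let F be a finite subset of ℝ × ℝ. Then the set S = { x ∈ ℝ : 0 ≤ x ≤ 1 and there exist (c,d) ∈ F and an integer m with m > d and x = (m - c)/(m - d) } satisfies DCC. (This is the key step in Lemma 3(2): for each fixed (c,d), the values (m - c)/(m - d) increase to 1 as m → ∞, so the set of possible codiscrepancy coefficients α₀ ∈ [0,1] satisfies DCC.) -/
/-!
For a fixed pair `(c, d)`, the map `t ↦ (t - c) / (t - d) = 1 + (d - c) / (t - d)` is monotone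
on `t > d` when `d ≤ c`, while for `c < d` all its values exceed `1`. Since the integers `m > d`
are bounded below, they form a well-founded set, and so does its monotone image. A finite union
of well-founded sets is well-founded.
-/

/-- A set `S ⊆ ℝ` satisfies the descending chain condition: there is no strictly
decreasing sequence of elements of `S`. -/
def SatisfiesDCC (S : Set ℝ) : Prop :=
  ¬ ∃ f : ℕ → ℝ, StrictAnti f ∧ ∀ n, f n ∈ S

theorem Set.IsWF.satisfiesDCC {S : Set ℝ} (hS : S.IsWF) : SatisfiesDCC S := by
  rintro ⟨f, hf, hfS⟩
  exact Set.isWF_iff_no_descending_seq.1 hS f hf hfS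

theorem one_lt_sub_div_sub {c d t : ℝ} (hcd : c < d) (ht : d < t) : 1 < (t - c) / (t - d) := by
  rw [one_lt_div (sub_pos.2 ht)]
  linarith

theorem monotoneOn_sub_div_sub {c d : ℝ} (hdc : d ≤ c) :
    MonotoneOn (fun t : ℝ => (t - c) / (t - d)) (Set.Ioi d) := by
  intro s hs t ht hst
  rw [div_le_div_iff₀ (sub_pos.2 hs) (sub_pos.2 ht)]
  nlinarith

def codiscrepancyCoeffs (c d : ℝ) : Set ℝ :=
  { x | 0 ≤ x ∧ x ≤ 1 ∧ ∃ m : ℤ, d < (m : ℝ) ∧ x = ((m : ℝ) - c) / ((m : ℝ) - d) }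

theorem isWF_codiscrepancyCoeffs (c d : ℝ) : (codiscrepancyCoeffs c d).IsWF := by
  rcases lt_or_ge c d with hcd | hdc
  · convert Set.isWF_empty
    refine Set.eq_empty_of_forall_notMem ?_
    rintro x ⟨-, hx1, m, hm, rfl⟩
    exact (one_lt_sub_div_sub hcd hm).not_ge hx1
  · have hbdd : BddBelow {m : ℤ | d < (m : ℝ)} :=
      ⟨⌊d⌋, fun m hm => Int.floor_le_iff.2 (by linarith [show d < (m : ℝ) from hm])⟩
    have hmono : MonotoneOn (fun m : ℤ => ((m : ℝ) - c) / ((m : ℝ) - d)) {m : ℤ | d < (m : ℝ)} :=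
      fun m hm n hn hmn => monotoneOn_sub_div_sub hdc hm hn (Int.cast_le.2 hmn)
    refine (Set.isPWO_iff_isWF.1 (hbdd.isWF.isPWO.image_of_monotoneOn hmono)).mono ?_
    rintro x ⟨-, -, m, hm, rfl⟩
    exact ⟨m, hm, rfl⟩

/-- The key step in Lemma 3(2): for a finite set `F ⊆ ℝ × ℝ`, the set of all
`x = (m - c)/(m - d) ∈ [0,1]` with `(c, d) ∈ F` and `m` an integer with `m > d`
satisfies the descending chain condition. -/
theorem dcc_of_codiscrepancy_coefficients (F : Finset (ℝ × ℝ)) :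
    SatisfiesDCC { x : ℝ | 0 ≤ x ∧ x ≤ 1 ∧
      ∃ p ∈ F, ∃ m : ℤ, p.2 < (m : ℝ) ∧ x = ((m : ℝ) - p.1) / ((m : ℝ) - p.2) } := by
  have hwf : (⋃ p ∈ F, codiscrepancyCoeffs p.1 p.2).IsWF :=
    F.wellFoundedOn_bUnion.2 fun p _ => isWF_codiscrepancyCoeffs p.1 p.2
  refine (hwf.mono ?_).satisfiesDCC
  rintro x ⟨hx0, hx1, p, hp, m, hm, hx⟩
  exact Set.mem_biUnion hp ⟨hx0, hx1, m, hm, hx⟩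
end

section
/- (Theorem A.1.6(a), first assertion) A connected parabolic log canonical system A of size n is minimal if and only if either A contains no element of the first kind (no index i with A i i = -1), or n = 2. -/
open Matrix

/-- A real matrix is negative definite: `xᵀ A x < 0` for every nonzero `x`. -/
def NegDefMat {V : Type*} [Fintype V] (A : Matrix V V ℝ) : Prop :=
  ∀ x : V → ℝ, x ≠ 0 → x ⬝ᵥ A.mulVec x < 0

/-- A real matrix is negative semidefinite: `xᵀ A x ≤ 0` for every `x`. -/
def NegSemidefMat {V : Type*} [Fintype V] (A : Matrix V V ℝ) : Prop :=
  ∀ x : V → ℝ, x ⬝ᵥ A.mulVec x ≤ 0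

/-- A real symmetric matrix has at most one positive eigenvalue (with multiplicity). -/
def AtMostOnePosEig {V : Type*} [Fintype V] [DecidableEq V] (A : Matrix V V ℝ) : Prop :=
  ∃ hA : A.IsHermitian, Fintype.card {i // 0 < hA.eigenvalues i} ≤ 1

/-- The real matrix associated to an integer matrix. -/
def matReal {V : Type*} (A : Matrix V V ℤ) : Matrix V V ℝ := A.map Int.cast

/-- An at most hyperbolic system of vectors, encoded by its Gram matrix. -/
def IsSystem {V : Type*} [Fintype V] [DecidableEq V] (A : Matrix V V ℤ) : Prop :=
  Nonempty V ∧ A.IsSymm ∧ (∀ i, A i i ≤ -1) ∧ (∀ i j, i ≠ j → 0 ≤ A i j) ∧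
    AtMostOnePosEig (matReal A)

/-- The graph of a system: an edge between `i ≠ j` iff `A i j > 0`. -/
def sysGraph {V : Type*} (A : Matrix V V ℤ) : SimpleGraph V :=
  SimpleGraph.fromRel fun i j => 0 < A i j

/-- The principal submatrix of `A` on a subset `s` of indices. -/
def subMat {V : Type*} (A : Matrix V V ℤ) (s : Finset V) :
    Matrix {i // i ∈ s} {i // i ∈ s} ℤ :=
  A.submatrix Subtype.val Subtype.val

/-- A system is elliptic if its Gram matrix is negative definite over `ℝ`. -/
def IsElliptic {V : Type*} [Fintype V] (A : Matrix V V ℤ) : Prop :=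
  NegDefMat (matReal A)

/-- A system is hyperbolic if it is not negative semidefinite over `ℝ`. -/
def IsHyperbolic {V : Type*} [Fintype V] (A : Matrix V V ℤ) : Prop :=
  ¬ NegSemidefMat (matReal A)

/-- A system is Lanner if it is hyperbolic but every proper subsystem
is negative semidefinite. -/
def IsLanner {V : Type*} [Fintype V] [DecidableEq V] (A : Matrix V V ℤ) : Prop :=
  IsHyperbolic A ∧ ∀ s : Finset V, s ≠ Finset.univ → NegSemidefMat (matReal (subMat A s))

/-- A system is connected parabolic if it is negative semidefinite but not negative
definite over `ℝ` and its graph is connected. -/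
def IsConnParabolic {V : Type*} [Fintype V] (A : Matrix V V ℤ) : Prop :=
  NegSemidefMat (matReal A) ∧ ¬ NegDefMat (matReal A) ∧ (sysGraph A).Connected

/-- A system is log canonical if for every subset `s` of indices whose principal
submatrix is negative definite, the canonical coefficients `α` (the unique solution of
`∑_{j ∈ s} A i j * α j = -A i i - 2` for `i ∈ s`) satisfy `α i ≥ -1` for all `i ∈ s`,
with strict inequality whenever `i` is joined, within the graph of `A` restricted to `s`,
to some `e ∈ s` with `A e e = -1`. -/
def IsLogCanonical {V : Type*} [Fintype V] [DecidableEq V] (A : Matrix V V ℤ) : Prop :=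
  ∀ s : Finset V, NegDefMat (matReal (subMat A s)) →
    ∀ α : V → ℝ, (∀ i ∈ s, ∑ j ∈ s, (A i j : ℝ) * α j = -(A i i : ℝ) - 2) →
      (∀ i ∈ s, -1 ≤ α i) ∧
      (∀ i e : {x // x ∈ s}, A e.val e.val = -1 →
        ((sysGraph A).comap (Subtype.val : {x // x ∈ s} → V)).Reachable i e →
        -1 < α i.val)

/-- An index `e` of the first kind (`A e e = -1`) is contractible if every other
index `i` satisfies `A i e = 0`, or `A i i ≤ -2` and `A i e = 1`. -/
def Contractible {V : Type*} (A : Matrix V V ℤ) (e : V) : Prop :=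
  ∀ i, i ≠ e → A i e = 0 ∨ (A i i ≤ -2 ∧ A i e = 1)

/-- A log canonical system is minimal if it contains no contractible element
of the first kind. -/
def IsMinimal {V : Type*} (A : Matrix V V ℤ) : Prop :=
  ¬ ∃ e, A e e = -1 ∧ Contractible A e


/-!
Let `e` be an element of the first kind and `i ≠ e` a neighbour, with `b = A i e ≥ 1` and
`a = A i i`. Testing negative semidefiniteness on `b e + i` gives `b² + a ≤ 0`.
If `b² + a < 0` the pair `{e, i}` is negative definite; its canonical coefficient at `i` is
`(b + 2 + a) / (-a - b²)`, and log canonicity makes it exceed `-1`, i.e. `b² < b + 2`, so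
`b = 1` and `a ≤ -2`. If `b² + a = 0`, then `b e + i` lies in the kernel, so no other index is
joined to `{e, i}`, and connectedness leaves only `n = 2`. Thus for `n ≠ 2` every element of the
first kind is contractible. Conversely, for `n = 2` a contractible `e` would make `A` the
negative definite matrix `[[-1, 1], [1, a]]` with `a ≤ -2`.
-/

theorem SimpleGraph.Connected.mem_of_adj_closed {V : Type*} {G : SimpleGraph V}
    (hG : G.Connected) {S : Set V} {a : V} (ha : a ∈ S)
    (hS : ∀ u v, G.Adj u v → u ∈ S → v ∈ S) (v : V) : v ∈ S := by
  by_contra hv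
  obtain ⟨d, -, hd, hd'⟩ := (hG.preconnected a v).some.exists_boundary_dart S ha hv
  exact hd' (hS _ _ d.adj hd)

section QuadraticForm

theorem eq_single_add_single_of_forall_eq_or_eq {V : Type*} [DecidableEq V] {e i : V}
    (hei : e ≠ i) (hV : ∀ k, k = e ∨ k = i) (x : V → ℝ) :
    x = Pi.single e (x e) + Pi.single i (x i) := by
  funext k
  rcases hV k with rfl | rfl <;> simp [hei, hei.symm]

variable {V : Type*} [Fintype V]

theorem dotProduct_mulVec_single_add_single [DecidableEq V] (M : Matrix V V ℝ) (e i : V)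
    (u v : ℝ) :
    (Pi.single e u + Pi.single i v) ⬝ᵥ M *ᵥ (Pi.single e u + Pi.single i v) =
      M e e * u * u + (M e i + M i e) * u * v + M i i * v * v := by
  simp only [mulVec_add, dotProduct_add, add_dotProduct, single_dotProduct, mulVec_single,
    Pi.smul_apply, col_apply, MulOpposite.smul_eq_mul_unop, MulOpposite.unop_op]
  ring

theorem negDefMat_of_forall_eq_or_eq [DecidableEq V] (M : Matrix V V ℝ) {e i : V} (hei : e ≠ i)
    (hV : ∀ k, k = e ∨ k = i) (hsymm : M i e = M e i) (hee : M e e < 0)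
    (hdet : M e i ^ 2 < M e e * M i i) : NegDefMat M := by
  intro x hx
  have hxi : x e ≠ 0 ∨ x i ≠ 0 := by
    by_contra! h
    exact hx (by rw [eq_single_add_single_of_forall_eq_or_eq hei hV x, h.1, h.2]; simp)
  rw [eq_single_add_single_of_forall_eq_or_eq hei hV x, dotProduct_mulVec_single_add_single,
    hsymm]
  -- `M e e` times the form is `(M e e * x e + M e i * x i) ^ 2 + det M * x i ^ 2`.
  rcases eq_or_ne (x i) 0 with h | h
  · rw [h]
    nlinarith [mul_self_pos.mpr (hxi.resolve_right (not_not.mpr h))]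
  · nlinarith [sq_nonneg (M e e * x e + M e i * x i), mul_self_pos.mpr h]

theorem NegSemidefMat.mulVec_eq_zero {M : Matrix V V ℝ} (hM : NegSemidefMat M)
    (hsymm : M.IsSymm) {x : V → ℝ} (hx : x ⬝ᵥ M *ᵥ x = 0) : M *ᵥ x = 0 := by
  have hpsd : (-M).PosSemidef := Matrix.posSemidef_iff_dotProduct_mulVec.mpr
    ⟨Matrix.isHermitian_iff_isSymm.mpr hsymm.neg, fun y => by
      simpa [Matrix.neg_mulVec] using hM y⟩
  have := (hpsd.dotProduct_mulVec_zero_iff x).mp (by simp [Matrix.neg_mulVec, hx])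
  simpa [Matrix.neg_mulVec] using this

end QuadraticForm

section System

variable {V : Type*} {A : Matrix V V ℤ}

theorem matReal_apply (i j : V) : matReal A i j = A i j := rfl

theorem sysGraph_adj_iff (hsymm : A.IsSymm) {i j : V} :
    (sysGraph A).Adj i j ↔ i ≠ j ∧ 0 < A i j := by
  rw [sysGraph, SimpleGraph.fromRel_adj, hsymm.apply i j, or_self]

variable [DecidableEq V]

theorem negDefMat_subMat_pair (hsymm : A.IsSymm) {e i : V} (hei : e ≠ i) (he : A e e = -1)
    (h : A i e ^ 2 + A i i < 0) : NegDefMat (matReal (subMat A {e, i})) := by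
  refine negDefMat_of_forall_eq_or_eq _ (e := ⟨e, by simp⟩) (i := ⟨i, by simp⟩)
    (by simpa using hei) ?_ ?_ ?_ ?_
  · rintro ⟨k, hk⟩
    simpa using hk
  · simp [matReal_apply, subMat, hsymm.apply]
  · simp [matReal_apply, subMat, he]
  · simp only [matReal_apply, subMat, submatrix_apply, he, hsymm.apply i e]
    exact_mod_cast (by linarith : A i e ^ 2 < -1 * A i i)

variable [Fintype V]

theorem sq_add_diag_nonpos (hNSD : NegSemidefMat (matReal A)) (hsymm : A.IsSymm) {e : V}
    (he : A e e = -1) (i : V) : A i e ^ 2 + A i i ≤ 0 := by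
  have hq := hNSD (Pi.single e (A i e : ℝ) + Pi.single i 1)
  rw [dotProduct_mulVec_single_add_single] at hq
  simp only [matReal_apply, he, hsymm.apply i e] at hq
  push_cast at hq
  exact_mod_cast (by nlinarith : (A i e : ℝ) ^ 2 + A i i ≤ 0)

theorem sq_lt_add_two_of_isLogCanonical (hlc : IsLogCanonical A) (hsymm : A.IsSymm) {e i : V}
    (hei : e ≠ i) (he : A e e = -1) (hadj : 0 < A i e) (h : A i e ^ 2 + A i i < 0) :
    A i e ^ 2 < A i e + 2 := by
  have hd : (0 : ℝ) < -A i i - A i e ^ 2 := by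
    exact_mod_cast (by linarith : 0 < -A i i - A i e ^ 2)
  set αi : ℝ := (A i e + 2 + A i i) / (-A i i - A i e ^ 2)
  have hαi_mul : αi * (-A i i - A i e ^ 2) = A i e + 2 + A i i := div_mul_cancel₀ _ hd.ne'
  have hcan : ∀ j ∈ ({e, i} : Finset V), ∑ l ∈ {e, i}, (A j l : ℝ) *
      (Pi.single e (1 + A i e * αi) + Pi.single i αi : V → ℝ) l = -(A j j : ℝ) - 2 := by
    simp only [Finset.mem_insert, Finset.mem_singleton, forall_eq_or_imp, forall_eq,
      Finset.sum_pair hei, Pi.add_apply, Pi.single_eq_same, Pi.single_eq_of_ne hei,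
      Pi.single_eq_of_ne hei.symm, add_zero, zero_add, he, hsymm.apply i e]
    push_cast
    constructor
    · ring
    · linear_combination -hαi_mul
  have hreach : SimpleGraph.Reachable
      ((sysGraph A).comap (Subtype.val : {x // x ∈ ({e, i} : Finset V)} → V))
      ⟨i, by simp⟩ ⟨e, by simp⟩ :=
    SimpleGraph.Adj.reachable ((sysGraph_adj_iff hsymm).mpr ⟨hei.symm, hadj⟩)
  have hαi := (hlc _ (negDefMat_subMat_pair hsymm hei he h) _ hcan).2 _ _ he hreach
  simp only [Pi.add_apply, Pi.single_eq_same, Pi.single_eq_of_ne hei.symm, zero_add] at hαi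
  rw [lt_div_iff₀ hd] at hαi
  exact_mod_cast (by nlinarith : (A i e : ℝ) ^ 2 < A i e + 2)

theorem forall_eq_or_eq_of_sq_add_diag_eq_zero (hNSD : NegSemidefMat (matReal A))
    (hsymm : A.IsSymm) (hoff : ∀ i j, i ≠ j → 0 ≤ A i j) (hconn : (sysGraph A).Connected)
    {e i : V} (he : A e e = -1) (hadj : 0 < A i e) (h : A i e ^ 2 + A i i = 0) (k : V) :
    k = e ∨ k = i := by
  have hnull : matReal A *ᵥ (Pi.single e (A i e : ℝ) + Pi.single i 1) = 0 := by
    refine hNSD.mulVec_eq_zero (hsymm.map _) ?_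
    rw [dotProduct_mulVec_single_add_single]
    simp only [matReal_apply, he, hsymm.apply i e]
    exact_mod_cast (by linear_combination h :
      (-1 : ℤ) * A i e * A i e + (A i e + A i e) * A i e * 1 + A i i * 1 * 1 = 0)
  have hrow : ∀ k, k ≠ e → k ≠ i → A k e = 0 ∧ A k i = 0 := by
    intro k hke hki
    have hk := congrFun hnull k
    simp only [mulVec_add, mulVec_single, Pi.add_apply, Pi.smul_apply, col_apply,
      MulOpposite.smul_eq_mul_unop, MulOpposite.unop_op, matReal_apply, mul_one,
      Pi.zero_apply] at hk
    have hk' : A k e * A i e + A k i = 0 := by exact_mod_cast hk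
    have h1 := hoff k e hke
    have h2 := hoff k i hki
    constructor <;> nlinarith
  refine hconn.mem_of_adj_closed (S := {k | k = e ∨ k = i}) (Or.inl rfl) ?_ k
  rintro u v huv hu
  by_contra hv
  simp only [Set.mem_ofPred_eq, not_or] at hv
  rw [sysGraph_adj_iff hsymm] at huv
  have hv_zero := hrow v hv.1 hv.2
  have hvu : 0 < A v u := hsymm.apply u v ▸ huv.2
  rcases hu with rfl | rfl <;> omega

theorem contractible_of_card_ne_two (hNSD : NegSemidefMat (matReal A)) (hsymm : A.IsSymm)
    (hoff : ∀ i j, i ≠ j → 0 ≤ A i j) (hconn : (sysGraph A).Connected)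
    (hlc : IsLogCanonical A) (hcard : Nat.card V ≠ 2) {e : V} (he : A e e = -1) :
    Contractible A e := by
  intro i hie
  rcases (hoff i e hie).eq_or_lt with h0 | hadj
  · exact Or.inl h0.symm
  rcases (sq_add_diag_nonpos hNSD hsymm he i).lt_or_eq with hlt | hnull
  · have hlt2 := sq_lt_add_two_of_isLogCanonical hlc hsymm hie.symm he hadj hlt
    have hb : A i e = 1 := by nlinarith
    exact Or.inr ⟨by nlinarith, hb⟩
  · refine absurd (Nat.card_eq_two_iff.mpr ⟨e, i, hie.symm, Set.eq_univ_of_forall fun k => ?_⟩)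
      hcard
    exact forall_eq_or_eq_of_sq_add_diag_eq_zero hNSD hsymm hoff hconn he hadj hnull k

theorem not_contractible_of_card_eq_two (hsymm : A.IsSymm) (hND : ¬ NegDefMat (matReal A))
    (hconn : (sysGraph A).Connected) (hcard : Nat.card V = 2) {e : V} (he : A e e = -1) :
    ¬ Contractible A e := by
  obtain ⟨i, hie, hV⟩ := (Nat.card_eq_two_iff' e).mp hcard
  have hV' : ∀ k, k = e ∨ k = i := fun k => (eq_or_ne k e).imp_right (hV k)
  intro hcon
  rcases hcon i hie with h0 | ⟨hii, hie1⟩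
  · refine hie (hconn.mem_of_adj_closed (S := {e}) rfl ?_ i)
    rintro u v huv rfl
    rw [sysGraph_adj_iff hsymm] at huv
    rcases hV' v with rfl | rfl
    · rfl
    · rw [hsymm.apply] at h0
      omega
  · refine hND (negDefMat_of_forall_eq_or_eq _ hie.symm hV' ?_ ?_ ?_)
    · simp [matReal_apply, hsymm.apply]
    · simp [matReal_apply, he]
    · simp only [matReal_apply, he, hsymm.apply i e, hie1]
      exact_mod_cast (by linarith : (1 : ℤ) ^ 2 < -1 * A i i)

end System

/-- Theorem A.1.6(a), first assertion: a connected parabolic log canonical system of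
size `n` is minimal if and only if it contains no element of the first kind, or `n = 2`. -/
theorem connParabolic_minimal_iff {n : ℕ}
    (A : Matrix (Fin n) (Fin n) ℤ) (hsys : IsSystem A) (hpar : IsConnParabolic A)
    (hlc : IsLogCanonical A) :
    IsMinimal A ↔ ((¬ ∃ i, A i i = -1) ∨ n = 2) := by
  obtain ⟨-, hsymm, -, hoff, -⟩ := hsys
  obtain ⟨hNSD, hND, hconn⟩ := hpar
  constructor
  · intro hmin
    by_contra! h
    obtain ⟨⟨e, he⟩, hn⟩ := h
    have hcard : Nat.card (Fin n) ≠ 2 := by simpa using hn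
    exact hmin ⟨e, he, contractible_of_card_ne_two hNSD hsymm hoff hconn hlc hcard he⟩
  · rintro h ⟨e, he, hcon⟩
    rcases h with h | rfl
    · exact h ⟨e, he⟩
    · exact not_contractible_of_card_eq_two hsymm hND hconn (by simp) he hcon
end

section
/- Let A be an n × n real symmetric negative definite matrix with A i i < 0 for all i and A i j ≥ 0 for all i ≠ j. Let Γ be the simple graph on the index set with an edge between i ≠ j iff A i j > 0. Then for all indices i, j: (A⁻¹) i j ≠ 0 if and only if i and j lie in the same connected component of Γ (in particular all diagonal entries of A⁻¹ are nonzero). Equivalently, after simultaneously permuting rows and columns according to the connected components of Γ, A⁻¹ becomes block diagonal with all entries in each diagonal block nonzero. -/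
/-!
Write `C = A⁻¹`. Splitting a column `x` of `C` as `x⁺ - x⁻`, the off-diagonal signs of `A` give
`x⁺ ⬝ A x⁻ ≥ 0`, while `A x` is a standard basis vector, so `x⁺ ⬝ A x⁺ ≥ 0`; negative
definiteness forces `x⁺ = 0`, i.e. `C ≤ 0` entrywise. In the identity
`A u u * C u w = δ u w - ∑_{m ≠ u} A u m * C m w` every term of the sum is `≤ 0`, so `C w w < 0`,
and `C v w < 0` propagates to `C u w < 0` along each edge `u — v` of `Γ`. Conversely `A` commutes
with the projection onto a connected component of `Γ`, hence so does `C`, so `C` vanishes between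
different components.
-/

open Matrix Finset

namespace Matrix

variable {n R : Type*}

theorem apply_eq_zero_of_reachable_of_not_reachable {A : Matrix n n ℝ}
    (hoff : ∀ i j, i ≠ j → 0 ≤ A i j) {i k l : n}
    (hk : (SimpleGraph.fromRel fun i j => 0 < A i j).Reachable i k)
    (hl : ¬(SimpleGraph.fromRel fun i j => 0 < A i j).Reachable i l) : A k l = 0 ∧ A l k = 0 := by
  have hkl : k ≠ l := fun h => hl (h ▸ hk)
  have hadj : ¬(SimpleGraph.fromRel fun i j => 0 < A i j).Adj k l :=
    fun h => hl (hk.trans h.reachable)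
  simp only [SimpleGraph.fromRel_adj, not_and, not_or, not_lt] at hadj
  obtain ⟨hkl', hlk'⟩ := hadj hkl
  exact ⟨le_antisymm hkl' (hoff k l hkl), le_antisymm hlk' (hoff l k hkl.symm)⟩

variable [Fintype n]

theorem dotProduct_mulVec_nonneg_of_mul_eq_zero {A : Matrix n n ℝ}
    (hoff : ∀ i j, i ≠ j → 0 ≤ A i j) {p q : n → ℝ} (hp : 0 ≤ p) (hq : 0 ≤ q)
    (hpq : ∀ k, p k * q k = 0) : 0 ≤ p ⬝ᵥ A *ᵥ q := by
  simp only [dotProduct, mulVec, mul_sum]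
  refine sum_nonneg fun k _ => sum_nonneg fun l _ => ?_
  rcases eq_or_ne k l with rfl | hkl
  · rw [mul_left_comm, hpq, mul_zero]
  · exact mul_nonneg (hp k) (mul_nonneg (hoff k l hkl) (hq l))

theorem nonpos_of_mulVec_nonneg {A : Matrix n n ℝ}
    (hneg : ∀ x : n → ℝ, x ≠ 0 → x ⬝ᵥ A *ᵥ x < 0)
    (hoff : ∀ i j, i ≠ j → 0 ≤ A i j) {x : n → ℝ} (hx : 0 ≤ A *ᵥ x) : x ≤ 0 := by
  have hpos : 0 ≤ x⁺ ⬝ᵥ A *ᵥ x⁺ := by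
    have hsplit : x⁺ = x + x⁻ := eq_add_of_sub_eq (posPart_sub_negPart x)
    rw [hsplit, mulVec_add, dotProduct_add, ← hsplit]
    refine add_nonneg (dotProduct_nonneg_of_nonneg (posPart_nonneg x) hx) ?_
    refine dotProduct_mulVec_nonneg_of_mul_eq_zero hoff (posPart_nonneg x) (negPart_nonneg x)
      fun k => ?_
    rcases le_total (x k) 0 with h | h <;> simp [h]
  have hzero : x⁺ = 0 := by
    by_contra h
    exact (hneg _ h).not_ge hpos
  rwa [posPart_eq_zero] at hzero

variable [DecidableEq n]

theorem diag_mul_apply_eq_one_apply_sub [Ring R] {A C : Matrix n n R} (hAC : A * C = 1) (u w : n) :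
    A u u * C u w = (1 : Matrix n n R) u w - ∑ m ∈ univ.erase u, A u m * C m w := by
  rw [eq_sub_iff_add_eq, ← hAC, mul_apply]
  exact add_sum_erase _ (fun m => A u m * C m w) (mem_univ u)

theorem inv_apply_eq_zero_of_mem_of_notMem [CommRing R] {A : Matrix n n R} {S : Set n}
    (hS : ∀ k ∈ S, ∀ l ∉ S, A k l = 0 ∧ A l k = 0) {k l : n} (hk : k ∈ S) (hl : l ∉ S) :
    A⁻¹ k l = 0 := by
  classical
  set P : Matrix n n R := diagonal fun k => if k ∈ S then 1 else 0
  have hAP : Commute A P := by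
    ext k l
    simp only [P, mul_diagonal, diagonal_mul]
    by_cases hk : k ∈ S <;> by_cases hl : l ∈ S
    · simp [hk, hl]
    · simp [hk, hl, (hS k hk l hl).1]
    · simp [hk, hl, (hS l hl k hk).2]
    · simp [hk, hl]
  have hCP := congrFun (congrFun (Commute.zpow_left hAP (-1)).eq k) l
  simpa [zpow_neg_one, P, hk, hl, eq_comm] using hCP

section NegDef

variable {A : Matrix n n ℝ}

theorem diag_neg_of_dotProduct_mulVec_neg (hneg : ∀ x : n → ℝ, x ≠ 0 → x ⬝ᵥ A *ᵥ x < 0) (i : n) :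
    A i i < 0 := by
  simpa using hneg (Pi.single i 1) (by simp)

theorem mul_nonsing_inv_of_dotProduct_mulVec_neg
    (hneg : ∀ x : n → ℝ, x ≠ 0 → x ⬝ᵥ A *ᵥ x < 0) : A * A⁻¹ = 1 := by
  refine mul_nonsing_inv A (isUnit_iff_ne_zero.2 fun h => ?_)
  obtain ⟨x, hx, hAx⟩ := exists_mulVec_eq_zero_iff.2 h
  simpa [hAx] using hneg x hx

theorem inv_apply_nonpos (hneg : ∀ x : n → ℝ, x ≠ 0 → x ⬝ᵥ A *ᵥ x < 0)
    (hoff : ∀ i j, i ≠ j → 0 ≤ A i j) (i j : n) : A⁻¹ i j ≤ 0 := by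
  have hcol : A *ᵥ (A⁻¹ *ᵥ Pi.single j 1) = Pi.single j 1 := by
    rw [mulVec_mulVec, mul_nonsing_inv_of_dotProduct_mulVec_neg hneg, one_mulVec]
  have := nonpos_of_mulVec_nonneg hneg hoff (hcol ▸ Pi.single_nonneg.2 zero_le_one) i
  simpa [mulVec_single_one] using this

theorem inv_apply_neg_of_sum_erase_lt (hneg : ∀ x : n → ℝ, x ≠ 0 → x ⬝ᵥ A *ᵥ x < 0) {u w : n}
    (h : ∑ m ∈ univ.erase u, A u m * A⁻¹ m w < (1 : Matrix n n ℝ) u w) : A⁻¹ u w < 0 := by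
  refine neg_of_mul_pos_right ?_ (diag_neg_of_dotProduct_mulVec_neg hneg u).le
  rw [diag_mul_apply_eq_one_apply_sub (mul_nonsing_inv_of_dotProduct_mulVec_neg hneg)]
  linarith

theorem inv_apply_self_neg (hneg : ∀ x : n → ℝ, x ≠ 0 → x ⬝ᵥ A *ᵥ x < 0)
    (hoff : ∀ i j, i ≠ j → 0 ≤ A i j) (w : n) : A⁻¹ w w < 0 := by
  have hsum : ∑ m ∈ univ.erase w, A w m * A⁻¹ m w ≤ 0 := sum_nonpos fun m hm =>
    mul_nonpos_of_nonneg_of_nonpos (hoff w m (ne_of_mem_erase hm).symm)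
      (inv_apply_nonpos hneg hoff m w)
  exact inv_apply_neg_of_sum_erase_lt hneg (by rw [one_apply_eq]; linarith)

theorem inv_apply_neg_of_pos_of_neg (hneg : ∀ x : n → ℝ, x ≠ 0 → x ⬝ᵥ A *ᵥ x < 0)
    (hoff : ∀ i j, i ≠ j → 0 ≤ A i j) {u v w : n} (huv : u ≠ v) (hA : 0 < A u v)
    (hC : A⁻¹ v w < 0) : A⁻¹ u w < 0 := by
  refine inv_apply_neg_of_sum_erase_lt hneg ?_
  calc ∑ m ∈ univ.erase u, A u m * A⁻¹ m w ≤ ∑ m ∈ {v}, A u m * A⁻¹ m w := by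
        refine sum_le_sum_of_subset_of_nonpos' (by simpa using huv.symm) fun m hm _ => ?_
        exact mul_nonpos_of_nonneg_of_nonpos (hoff u m (ne_of_mem_erase hm).symm)
          (inv_apply_nonpos hneg hoff m w)
    _ < 0 := by simpa using mul_neg_of_pos_of_neg hA hC
    _ ≤ (1 : Matrix n n ℝ) u w := by rw [one_apply]; split_ifs <;> norm_num

theorem inv_apply_neg_of_reachable (hsymm : A.IsSymm)
    (hneg : ∀ x : n → ℝ, x ≠ 0 → x ⬝ᵥ A *ᵥ x < 0) (hoff : ∀ i j, i ≠ j → 0 ≤ A i j) {u w : n}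
    (h : (SimpleGraph.fromRel fun i j => 0 < A i j).Reachable u w) : A⁻¹ u w < 0 := by
  obtain ⟨p⟩ := h
  induction p with
  | nil => exact inv_apply_self_neg hneg hoff _
  | cons hadj _ ih =>
    obtain ⟨huv, hpos⟩ := (SimpleGraph.fromRel_adj _ _ _).1 hadj
    exact inv_apply_neg_of_pos_of_neg hneg hoff huv (hpos.elim id (hsymm.apply _ _ ▸ ·)) ih

end NegDef

end Matrix

theorem inv_entry_ne_zero_iff_reachable_general {n : Type*} [Fintype n] [DecidableEq n]
    (A : Matrix n n ℝ) (hsymm : A.IsSymm)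
    (hneg : ∀ x : n → ℝ, x ≠ 0 → x ⬝ᵥ A.mulVec x < 0)
    (hoff : ∀ i j, i ≠ j → 0 ≤ A i j) :
    ∀ i j, A⁻¹ i j ≠ 0 ↔
      (SimpleGraph.fromRel fun i j => 0 < A i j).Reachable i j := by
  set Γ := SimpleGraph.fromRel fun i j => 0 < A i j
  intro i j
  refine ⟨fun h => ?_, fun h => (inv_apply_neg_of_reachable hsymm hneg hoff h).ne⟩
  by_contra hr
  exact h (inv_apply_eq_zero_of_mem_of_notMem (S := {k | Γ.Reachable i k})
    (fun k hk l hl => apply_eq_zero_of_reachable_of_not_reachable hoff hk hl)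
    (SimpleGraph.Reachable.refl i) hr)

/-- If `A` is a real symmetric negative definite matrix (`xᵀAx < 0` for every nonzero
`x`) with negative diagonal entries and nonnegative off-diagonal entries, and `Γ` is the
simple graph with an edge between `i ≠ j` iff `A i j > 0`, then `(A⁻¹) i j ≠ 0` if and
only if `i` and `j` lie in the same connected component of `Γ`; i.e. `A⁻¹` is block
diagonal along the connected components of `Γ`, with all entries in each block nonzero. -/
theorem inv_entry_ne_zero_iff_reachable {n : Type*} [Fintype n] [DecidableEq n]
    (A : Matrix n n ℝ) (hsymm : A.IsSymm)
    (hneg : ∀ x : n → ℝ, x ≠ 0 → x ⬝ᵥ A.mulVec x < 0)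
    (hdiag : ∀ i, A i i < 0) (hoff : ∀ i j, i ≠ j → 0 ≤ A i j) :
    ∀ i j, A⁻¹ i j ≠ 0 ↔
      (SimpleGraph.fromRel fun i j => 0 < A i j).Reachable i j :=
  inv_entry_ne_zero_iff_reachable_general A hsymm hneg hoff
end
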